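/- Let 𝒳 and 𝒴 be finite alphabets, Ŵ a DMC from 𝒳 to 𝒴, and P_X a pmf on 𝒳. Fix sequences x^n ∈ 𝒳^n and y^n ∈ 𝒴^n with Ŵ^n(y^n|x^n) > 0, and let X̄^n = (X̄_1,…,X̄_n) be i.i.d. with each X̄_i ∼ P_X. Then P( Ŵ^n(y^n | X̄^n) ≥ Ŵ^n(y^n | x^n) ) ≤ 2^{ −Σ_{i=1}^n i_P̂(x_i, y_i) }, where i_P̂(x,y) = log₂( Ŵ(y|x) / Σ_{x'} P_X(x')·Ŵ(y|x') ). -/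
import Mathlib


/-!
Markov-inequality step of the RCU bound: the probability that an independently drawn
codeword is at least as likely as the transmitted one is bounded by
2^{−i_{P̂}(x^n, y^n)}.
-/

open scoped BigOperators Classical

/-- `P` is a probability mass function on the finite type `Ω`. -/
def IsPMF {Ω : Type*} [Fintype Ω] (P : Ω → ℝ) : Prop :=
  (∀ ω, 0 ≤ P ω) ∧ ∑ ω, P ω = 1

/-- `W` is a discrete memoryless channel from `𝒳` to `𝒴`. -/
def IsDMC {𝒳 𝒴 : Type*} [Fintype 𝒴] (W : 𝒳 → 𝒴 → ℝ) : Prop :=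
  ∀ x, IsPMF (W x)

/-- The `n`-fold extension of the DMC `W`. -/
noncomputable def dmcN {𝒳 𝒴 : Type*} (W : 𝒳 → 𝒴 → ℝ) {n : ℕ}
    (xs : Fin n → 𝒳) (ys : Fin n → 𝒴) : ℝ :=
  ∏ i, W (xs i) (ys i)

/-- The information density (in bits) of the channel `Wh` with input pmf `PX`. -/
noncomputable def infoDensity {𝒳 𝒴 : Type*} [Fintype 𝒳] (Wh : 𝒳 → 𝒴 → ℝ) (PX : 𝒳 → ℝ)
    (x : 𝒳) (y : 𝒴) : ℝ :=
  Real.logb 2 (Wh x y / ∑ x', PX x' * Wh x' y)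

/-- **Markov bound on the pairwise error.** Fix `x^n`, `y^n` with `Wh^n(y^n|x^n) > 0`
and let `X̄^n` be i.i.d. with law `P_X`.  Then
`P(Wh^n(y^n|X̄^n) ≥ Wh^n(y^n|x^n)) ≤ 2^{−Σ_i i_{P̂}(x_i,y_i)}`. -/
theorem pairwise_error_le_two_rpow {𝒳 𝒴 : Type*} [Fintype 𝒳] [Fintype 𝒴]
    (Wh : 𝒳 → 𝒴 → ℝ) (hWh : IsDMC Wh) (PX : 𝒳 → ℝ) (hPX : IsPMF PX)
    (n : ℕ) (xs : Fin n → 𝒳) (ys : Fin n → 𝒴) (hpos : 0 < dmcN Wh xs ys) :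
    (∑ xbar : Fin n → 𝒳,
        if dmcN Wh xs ys ≤ dmcN Wh xbar ys then ∏ i, PX (xbar i) else 0)
      ≤ (2:ℝ) ^ (-(∑ i, infoDensity Wh PX (xs i) (ys i))) := by
  classical
  set C := dmcN Wh xs ys with hC
  have hw : ∀ i, 0 < Wh (xs i) (ys i) := by
    intro i
    rcases (hWh (xs i)).1 (ys i) |>.lt_or_eq with h | h
    · exact h
    · exfalso
      have : C = 0 := Finset.prod_eq_zero (Finset.mem_univ i) h.symm
      exact absurd this (ne_of_gt hpos)
  set Q : Fin n → ℝ := fun i => ∑ x', PX x' * Wh x' (ys i) with hQ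
  have hQnn : ∀ i, 0 ≤ Q i := fun i =>
    Finset.sum_nonneg fun x _ => mul_nonneg (hPX.1 x) ((hWh x).1 (ys i))
  -- Step 1: Markov
  have step1 : (∑ xbar : Fin n → 𝒳,
        if C ≤ dmcN Wh xbar ys then ∏ i, PX (xbar i) else 0)
      ≤ (∑ xbar : Fin n → 𝒳, ∏ i, PX (xbar i) * Wh (xbar i) (ys i)) / C := by
    rw [Finset.sum_div]
    apply Finset.sum_le_sum
    intro xbar _
    have hnn : 0 ≤ ∏ i, PX (xbar i) * Wh (xbar i) (ys i) :=
      Finset.prod_nonneg fun i _ => mul_nonneg (hPX.1 _) ((hWh _).1 _)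
    split_ifs with h
    · rw [le_div_iff₀ hpos]
      calc (∏ i, PX (xbar i)) * C ≤ (∏ i, PX (xbar i)) * dmcN Wh xbar ys :=
            mul_le_mul_of_nonneg_left h (Finset.prod_nonneg fun i _ => hPX.1 _)
        _ = ∏ i, PX (xbar i) * Wh (xbar i) (ys i) := by
            rw [dmcN, ← Finset.prod_mul_distrib]
    · exact div_nonneg hnn hpos.le
  -- Step 2: factorize the sum
  have step2 : (∑ xbar : Fin n → 𝒳, ∏ i, PX (xbar i) * Wh (xbar i) (ys i)) = ∏ i, Q i := by
    have h := Finset.prod_univ_sum (fun _ : Fin n => (Finset.univ : Finset 𝒳))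
      (fun i x => PX x * Wh x (ys i))
    rw [Fintype.piFinset_univ] at h
    rw [hQ, h]
  -- Step 3: compare with the rpow
  have step3 : (∏ i, Q i) / C ≤ (2:ℝ) ^ (-(∑ i, infoDensity Wh PX (xs i) (ys i))) := by
    rw [← Finset.sum_neg_distrib, Real.rpow_sum_of_pos (by norm_num : (0:ℝ) < 2),
      hC, dmcN, ← Finset.prod_div_distrib]
    apply Finset.prod_le_prod
    · intro i _; exact div_nonneg (hQnn i) (hw i).le
    · intro i _
      rcases (hQnn i).lt_or_eq with h | h
      · have : -infoDensity Wh PX (xs i) (ys i)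
            = Real.logb 2 (Q i / Wh (xs i) (ys i)) := by
          rw [infoDensity, ← Real.logb_inv, inv_div]
        rw [this, Real.rpow_logb (by norm_num) (by norm_num)
          (div_pos h (hw i))]
      · rw [← h]
        simp only [zero_div]
        positivity
  calc _ ≤ (∑ xbar : Fin n → 𝒳, ∏ i, PX (xbar i) * Wh (xbar i) (ys i)) / C := step1
    _ = (∏ i, Q i) / C := by rw [step2]
    _ ≤ _ := step3
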